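/- Let 0 < α < 1, c ∈ ℝ, d > 0, and let f(x) = (1/d)(x−c) − ((5−α)/(2d²))(x−c)² + ((3−α)/(2d³))(x−c)³. Then |f(x)| < 1 for all x ∈ [c, c+d], and |_cD^α_x f(x)| < d^{−α} for all x ∈ (c, c+d]. -/

import Mathlib

open MeasureTheory intervalIntegral

/-- The fractional integral `(1/Γ(1-α)) ∫_a^x f(u)(x-u)^(-α) du` whose derivative is the
left Riemann–Liouville fractional derivative of order `α ∈ (0,1)` with base point `a`. -/
noncomputable def leftRLint (a α : ℝ) (f : ℝ → ℝ) (x : ℝ) : ℝ :=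
  (1 / Real.Gamma (1 - α)) * ∫ u in a..x, f u * (x - u) ^ (-α)

/-- The left Riemann–Liouville fractional derivative of order `α ∈ (0,1)`:
`_aD^α_x f(x) = (d/dx)[(1/Γ(1-α)) ∫_a^x f(u)(x-u)^(-α) du]`. -/
noncomputable def leftRLderiv (a α : ℝ) (f : ℝ → ℝ) (x : ℝ) : ℝ :=
  deriv (leftRLint a α f) x

/-!
With `s = (x - c) / d` the cubic factors as `s (1 - s) (1 - (3 - α) s / 2)`, which is at most `1/4`
in absolute value on `[0, 1]`. The Beta integral gives the power rule
`D^α (x - c)^γ = Γ(γ + 1) / Γ(γ + 1 - α) · (x - c)^(γ - α)`, whence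
`D^α f(x) = d^(-α) s^(1-α) (1 - s) (2 - α - 3 s) / Γ(3 - α)`. Bernoulli's inequality
`s^(1-α) ≤ 1 - (1 - α)(1 - s)` turns `|s^(1-α) (1 - s) (2 - α - 3 s)| < 1` into a polynomial
inequality, and `Γ(3 - α) > Γ(2) = 1`.
-/

open Real Set Filter Topology

lemma integral_rpow_mul_one_sub_rpow {p q : ℝ} (hp : 0 < p) (hq : 0 < q) :
    ∫ v in (0:ℝ)..1, v ^ (p - 1) * (1 - v) ^ (q - 1) = Gamma p * Gamma q / Gamma (p + q) := by
  have h := Complex.betaIntegral_eq_Gamma_mul_div p q (by simpa) (by simpa)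
  apply Complex.ofReal_injective
  push_cast [← Complex.Gamma_ofReal]
  rw [← h, Complex.betaIntegral, ← intervalIntegral.integral_ofReal]
  refine integral_congr fun v hv => ?_
  rw [uIcc_of_le zero_le_one] at hv
  simp only [Complex.ofReal_mul]
  rw [Complex.ofReal_cpow hv.1, Complex.ofReal_cpow (sub_nonneg.2 hv.2)]
  push_cast
  rfl

lemma integral_sub_rpow_mul_sub_rpow {c x p q : ℝ} (hcx : c < x) (hp : 0 < p) (hq : 0 < q) :
    ∫ u in c..x, (u - c) ^ (p - 1) * (x - u) ^ (q - 1)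
      = Gamma p * Gamma q / Gamma (p + q) * (x - c) ^ (p + q - 1) := by
  set t := x - c
  have ht : 0 < t := sub_pos.2 hcx
  have hscale := integral_comp_add_mul (a := 0) (b := 1)
    (fun u => (u - c) ^ (p - 1) * (x - u) ^ (q - 1)) ht.ne' c
  simp only [mul_zero, add_zero, mul_one, add_sub_cancel_left, smul_eq_mul] at hscale
  rw [show c + t = x by ring] at hscale
  have hintegrand : EqOn (fun v => (t * v) ^ (p - 1) * (x - (c + t * v)) ^ (q - 1))
      (fun v => t ^ (p - 1) * t ^ (q - 1) * (v ^ (p - 1) * (1 - v) ^ (q - 1))) (uIcc 0 1) := by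
    intro v hv
    rw [uIcc_of_le zero_le_one] at hv
    dsimp only
    rw [show x - (c + t * v) = t * (1 - v) by ring,
      mul_rpow ht.le hv.1, mul_rpow ht.le (sub_nonneg.2 hv.2)]
    ring
  rw [integral_congr hintegrand, intervalIntegral.integral_const_mul,
    integral_rpow_mul_one_sub_rpow hp hq, eq_inv_mul_iff_mul_eq₀ ht.ne'] at hscale
  rw [← hscale, show p + q - 1 = 1 + (p - 1) + (q - 1) by ring, rpow_add ht, rpow_add ht,
    rpow_one]
  ring

lemma leftRLint_sub_rpow {c α γ x : ℝ} (hα : α < 1) (hγ : -1 < γ) (hcx : c < x) :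
    leftRLint c α (fun u => (u - c) ^ γ) x
      = Gamma (γ + 1) / Gamma (γ + 2 - α) * (x - c) ^ (γ + 1 - α) := by
  have h := integral_sub_rpow_mul_sub_rpow (p := γ + 1) (q := 1 - α) hcx (by linarith)
    (by linarith)
  simp only [add_sub_cancel_right, sub_sub_cancel_left] at h
  rw [leftRLint, h, show γ + 1 + (1 - α) = γ + 2 - α by ring,
    show γ + 2 - α - 1 = γ + 1 - α by ring]
  field_simp [(Gamma_pos_of_pos (sub_pos.2 hα)).ne']

lemma hasDerivAt_leftRLint_sub_rpow {c α γ x : ℝ} (hα : α < 1) (hγ : -1 < γ) (hαγ : α < γ + 1)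
    (hcx : c < x) :
    HasDerivAt (leftRLint c α (fun u => (u - c) ^ γ))
      (Gamma (γ + 1) / Gamma (γ + 1 - α) * (x - c) ^ (γ - α)) x := by
  have hpos : 0 < γ + 1 - α := by linarith
  have heq : leftRLint c α (fun u => (u - c) ^ γ)
      =ᶠ[𝓝 x] fun y => Gamma (γ + 1) / Gamma (γ + 2 - α) * (y - c) ^ (γ + 1 - α) :=
    eventually_of_mem (Ioi_mem_nhds hcx) fun y hy => leftRLint_sub_rpow hα hγ hy
  have hpow := ((hasDerivAt_id x).sub_const c).rpow_const (p := γ + 1 - α)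
    (Or.inl (sub_pos.2 hcx).ne')
  refine ((hpow.const_mul _).congr_of_eventuallyEq heq).congr_deriv ?_
  rw [show γ + 2 - α = γ + 1 - α + 1 by ring, Gamma_add_one hpos.ne',
    show γ + 1 - α - 1 = γ - α by ring]
  field_simp [(Gamma_pos_of_pos hpos).ne']
  simp

lemma intervalIntegrable_mul_sub_rpow {f : ℝ → ℝ} {c x α : ℝ} (hα : α < 1)
    (hf : ContinuousOn f (uIcc c x)) :
    IntervalIntegrable (fun u => f u * (x - u) ^ (-α)) volume c x := by
  have h := (intervalIntegrable_rpow' (a := 0) (b := x - c) (r := -α) (by linarith)).comp_sub_left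
    x
  simp only [sub_zero, sub_sub_cancel] at h
  exact h.symm.continuousOn_mul hf

lemma leftRLint_sum {ι : Type*} (s : Finset ι) (f : ι → ℝ → ℝ) {c α x : ℝ}
    (hf : ∀ i ∈ s, IntervalIntegrable (fun u => f i u * (x - u) ^ (-α)) volume c x) :
    leftRLint c α (fun u => ∑ i ∈ s, f i u) x = ∑ i ∈ s, leftRLint c α (f i) x := by
  simp only [leftRLint, Finset.sum_mul, intervalIntegral.integral_finsetSum hf, Finset.mul_sum]

lemma leftRLint_const_mul (a : ℝ) (f : ℝ → ℝ) (c α x : ℝ) :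
    leftRLint c α (fun u => a * f u) x = a * leftRLint c α f x := by
  simp only [leftRLint, mul_assoc, intervalIntegral.integral_const_mul]
  ring

lemma hasDerivAt_leftRLint_sum_mul_sub_rpow {ι : Type*} (s : Finset ι) (a γ : ι → ℝ)
    {c α x : ℝ} (hα : α < 1) (hγ : ∀ i ∈ s, 0 ≤ γ i) (hcx : c < x) :
    HasDerivAt (leftRLint c α fun u => ∑ i ∈ s, a i * (u - c) ^ γ i)
      (∑ i ∈ s, a i * (Gamma (γ i + 1) / Gamma (γ i + 1 - α) * (x - c) ^ (γ i - α))) x := by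
  have heq : leftRLint c α (fun u => ∑ i ∈ s, a i * (u - c) ^ γ i)
      =ᶠ[𝓝 x] fun y => ∑ i ∈ s, a i * leftRLint c α (fun u => (u - c) ^ γ i) y := by
    refine eventually_of_mem (Ioi_mem_nhds hcx) fun y _ => ?_
    rw [leftRLint_sum]
    · simp only [leftRLint_const_mul]
    · intro i hi
      refine intervalIntegrable_mul_sub_rpow hα (Continuous.continuousOn ?_)
      exact continuous_const.mul
        ((continuous_id.sub continuous_const).rpow_const fun _ => Or.inr (hγ i hi))
  refine (HasDerivAt.fun_sum fun i hi => ?_).congr_of_eventuallyEq heq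
  exact (hasDerivAt_leftRLint_sub_rpow hα (by linarith [hγ i hi]) (by linarith [hγ i hi])
    hcx).const_mul (a i)

noncomputable def cubicBump (α c d x : ℝ) : ℝ :=
  (1 / d) * (x - c) - ((5 - α) / (2 * d ^ 2)) * (x - c) ^ 2 + ((3 - α) / (2 * d ^ 3)) * (x - c) ^ 3

lemma cubicBump_eq {α c d : ℝ} (hd : d ≠ 0) (x : ℝ) :
    cubicBump α c d x = (x - c) / d * (1 - (x - c) / d) * (1 - (3 - α) / 2 * ((x - c) / d)) := by
  rw [cubicBump]
  field_simp
  ring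

lemma abs_mul_one_sub_mul_one_sub_mul_le {k s : ℝ} (hk0 : 0 ≤ k) (hk2 : k ≤ 2) (hs0 : 0 ≤ s)
    (hs1 : s ≤ 1) : |s * (1 - s) * (1 - k * s)| ≤ 1 / 4 := by
  have hks : 0 ≤ k * s := mul_nonneg hk0 hs0
  have hks2 : k * s ≤ 2 := by nlinarith
  rw [abs_mul, abs_of_nonneg (mul_nonneg hs0 (sub_nonneg.2 hs1))]
  calc s * (1 - s) * |1 - k * s| ≤ 1 / 4 * 1 := by
        gcongr
        · nlinarith [sq_nonneg (2 * s - 1)]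
        · exact abs_le.2 ⟨by linarith, by linarith⟩
    _ = 1 / 4 := mul_one _

lemma leftRLderiv_cubicBump {α c d x : ℝ} (hα : α < 1) (hd : 0 < d) (hcx : c < x) :
    leftRLderiv c α (cubicBump α c d) x = d ^ (-α) * (((x - c) / d) ^ (1 - α)
      * ((1 - (x - c) / d) * (2 - α - 3 * ((x - c) / d)))) / Gamma (3 - α) := by
  have hsum : cubicBump α c d = fun u => ∑ i : Fin 3,
      ![1 / d, -((5 - α) / (2 * d ^ 2)), (3 - α) / (2 * d ^ 3)] i
        * (u - c) ^ (![1, 2, 3] i : ℝ) := by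
    funext u
    simp only [cubicBump, Fin.sum_univ_three, Matrix.cons_val_zero, Matrix.cons_val_one,
      Matrix.cons_val, rpow_one, rpow_ofNat]
    ring
  have hderiv := hasDerivAt_leftRLint_sum_mul_sub_rpow (Finset.univ : Finset (Fin 3))
    ![1 / d, -((5 - α) / (2 * d ^ 2)), (3 - α) / (2 * d ^ 3)] ![1, 2, 3] hα
    (fun i _ => by fin_cases i <;> norm_num) hcx
  rw [leftRLderiv, hsum, hderiv.deriv]
  simp only [Fin.sum_univ_three, Matrix.cons_val_zero, Matrix.cons_val_one, Matrix.cons_val]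
  have hΓ : 0 < Gamma (2 - α) := Gamma_pos_of_pos (by linarith)
  have hG3 : Gamma (3 - α) = (2 - α) * Gamma (2 - α) := by
    rw [← Gamma_add_one (by linarith)]; ring_nf
  have hG4 : Gamma (3 + 1 - α) = (3 - α) * Gamma (3 - α) := by
    rw [← Gamma_add_one (by linarith)]; ring_nf
  have ht : 0 < x - c := sub_pos.2 hcx
  have hpow (k : ℝ) : (x - c) ^ (k - α) = (x - c) ^ (k - 1) * (x - c) ^ (1 - α) := by
    rw [← rpow_add ht]; ring_nf
  rw [hG4, show (1 : ℝ) + 1 - α = 2 - α by ring, show (2 : ℝ) + 1 - α = 3 - α by ring, hG3,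
    hpow 2, hpow 3, div_rpow ht.le hd.le, show (1 : ℝ) - α = 1 + -α by ring, rpow_add hd,
    rpow_one]
  norm_num [Gamma_two]
  have h2 : 2 - α ≠ 0 := by linarith
  have h3 : 3 - α ≠ 0 := by linarith
  field_simp
  ring

lemma rpow_mul_one_sub_mul_abs_lt_one {β s : ℝ} (hβ0 : 0 ≤ β) (hβ1 : β ≤ 1) (hs0 : 0 < s)
    (hs1 : s ≤ 1) : s ^ β * ((1 - s) * |1 + β - 3 * s|) < 1 := by
  have h1s : 0 ≤ 1 - s := by linarith
  have hbern : s ^ β ≤ 1 - β * (1 - s) := by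
    have := rpow_one_add_le_one_add_mul_self (s := s - 1) (by linarith) hβ0 hβ1
    rw [add_sub_cancel] at this
    linarith
  rcases le_total 0 (1 + β - 3 * s) with h | h
  · rw [abs_of_nonneg h]
    set y := β * (1 - s)
    have hy0 : 0 ≤ y := mul_nonneg hβ0 h1s
    have hy1 : y ≤ 1 := by nlinarith
    have hA : 0 < s * (4 - 3 * s) := by nlinarith
    calc s ^ β * ((1 - s) * (1 + β - 3 * s))
        ≤ (1 - y) * ((1 - s) * (1 + β - 3 * s)) := by gcongr
      _ = 1 - (y ^ 2 + s * (4 - 3 * s) * (1 - y)) := by ring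
      _ < 1 := by
        have : 0 < y ^ 2 + s * (4 - 3 * s) * (1 - y) := by
          rcases hy1.lt_or_eq with hy | hy
          · exact add_pos_of_nonneg_of_pos (sq_nonneg y) (mul_pos hA (sub_pos.2 hy))
          · rw [hy]; norm_num
        linarith
  · rw [abs_of_nonpos h]
    have : (1 - s) * -(1 + β - 3 * s) ≤ 1 / 3 := by nlinarith [sq_nonneg (3 * s - 2)]
    nlinarith [rpow_pos_of_pos hs0 β, rpow_le_one hs0.le hs1 hβ0, mul_nonneg h1s (neg_nonneg.2 h)]

lemma abs_leftRLderiv_cubicBump_lt {α c d x : ℝ} (hα0 : 0 ≤ α) (hα1 : α < 1) (hd : 0 < d)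
    (hcx : c < x) (hxd : x ≤ c + d) : |leftRLderiv c α (cubicBump α c d) x| < d ^ (-α) := by
  have hs0 : 0 < (x - c) / d := div_pos (sub_pos.2 hcx) hd
  have hs1 : (x - c) / d ≤ 1 := by rw [div_le_one hd]; linarith
  have hΓ : 1 < Gamma (3 - α) := by
    simpa [Gamma_two] using Gamma_strictMonoOn_Ici (self_mem_Ici (a := (2 : ℝ)))
      (show 2 ≤ 3 - α by linarith) (by linarith)
  have hcore := rpow_mul_one_sub_mul_abs_lt_one (β := 1 - α) (by linarith) (by linarith) hs0 hs1
  rw [show 1 + (1 - α) - 3 * ((x - c) / d) = 2 - α - 3 * ((x - c) / d) by ring] at hcore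
  have hΓ0 : 0 < Gamma (3 - α) := by linarith
  have hdα : 0 < d ^ (-α) := rpow_pos_of_pos hd _
  rw [leftRLderiv_cubicBump hα1 hd hcx, abs_div, abs_of_pos hΓ0, div_lt_iff₀ hΓ0, abs_mul,
    abs_of_pos hdα]
  refine mul_lt_mul_of_pos_left ?_ hdα
  rw [abs_mul, abs_mul, abs_of_pos (rpow_pos_of_pos hs0 _), abs_of_nonneg (sub_nonneg.2 hs1)]
  exact hcore.trans hΓ

/-- For `f(x) = (1/d)(x-c) - ((5-α)/(2d²))(x-c)² + ((3-α)/(2d³))(x-c)³` one has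
`|f(x)| < 1` on `[c, c+d]` and `|_cD^α_x f(x)| < d^(-α)` on `(c, c+d]`. -/
theorem cubic_bounds (α c d : ℝ) (hα0 : 0 < α) (hα1 : α < 1) (hd : 0 < d)
    (f : ℝ → ℝ)
    (hf : f = fun x => (1 / d) * (x - c) - ((5 - α) / (2 * d ^ 2)) * (x - c) ^ 2
        + ((3 - α) / (2 * d ^ 3)) * (x - c) ^ 3) :
    (∀ x ∈ Set.Icc c (c + d), |f x| < 1) ∧
      (∀ x ∈ Set.Ioc c (c + d), |leftRLderiv c α f x| < d ^ (-α)) := by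
  obtain rfl : f = cubicBump α c d := hf
  refine ⟨fun x ⟨hcx, hxd⟩ => ?_, fun x ⟨hcx, hxd⟩ =>
    abs_leftRLderiv_cubicBump_lt hα0.le hα1 hd hcx hxd⟩
  rw [cubicBump_eq hd.ne']
  have hs1 : (x - c) / d ≤ 1 := by rw [div_le_one hd]; linarith
  exact (abs_mul_one_sub_mul_one_sub_mul_le (by linarith) (by linarith)
    (div_nonneg (sub_nonneg.2 hcx) hd.le) hs1).trans_lt (by norm_num)
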